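/- Let Λ be a compact metric space and m a Borel probability measure on Λℕ. Then the following are equivalent: (a) m is invariant under the action of all finitely supported permutations of ℕ; (b) m is invariant under the action of all injections ℕ → ℕ; (c) m is invariant under the action of all strictly increasing maps ℕ → ℕ. (Here σ : ℕ → ℕ acts on Λℕ by precomposition x ↦ x ∘ σ, and on measures by pushforward along this map.) -/

import Mathlib

open MeasureTheory Finset

namespace Stmt19Aux

variable {Λ : Type*} [MeasurableSpace Λ]

lemma meas_comp (σ : ℕ → ℕ) : Measurable fun x : ℕ → Λ => x ∘ σ :=
  measurable_pi_iff.2 fun i => measurable_pi_apply (σ i)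

def eSwap (a N p q : ℕ) : ℕ → ℕ := fun i =>
  if i < a then i else if i = a then a + p else if i = a + 1 then a + N + q
    else i + 2 * N - 2

lemma eSwap_mono {a N p q : ℕ} (hp : p < N) (hq : q < N) : StrictMono (eSwap a N p q) := by
  apply strictMono_nat_of_lt_succ
  intro i
  unfold eSwap
  split_ifs <;> omega

lemma prod_eSwap (a n N p q : ℕ) (han : a + 2 ≤ n) (g : ℕ → Λ → ℝ) (x : ℕ → Λ) :
    ∏ i ∈ range n, g i (x (eSwap a N p q i)) =
      (g a (x (a + p)) * g (a + 1) (x (a + N + q))) *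
        ((∏ i ∈ range a, g i (x i)) * ∏ i ∈ Ico (a + 2) n, g i (x (i + 2 * N - 2))) := by
  have hsplit := Finset.prod_Ico_consecutive (fun i => g i (x (eSwap a N p q i)))
      (Nat.zero_le (a + 2)) han
  rw [Finset.range_eq_Ico, ← hsplit, ← Finset.range_eq_Ico, Finset.prod_range_succ,
    Finset.prod_range_succ]
  have h1 : ∏ i ∈ range a, g i (x (eSwap a N p q i)) = ∏ i ∈ range a, g i (x i) := by
    refine Finset.prod_congr rfl fun i hi => ?_
    have : eSwap a N p q i = i := by simp [eSwap, mem_range.1 hi]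
    rw [this]
  have h2 : eSwap a N p q a = a + p := by simp [eSwap]
  have h3 : eSwap a N p q (a + 1) = a + N + q := by
    unfold eSwap
    rw [if_neg (by omega), if_neg (by omega), if_pos rfl]
  have h4 : ∏ i ∈ Ico (a + 2) n, g i (x (eSwap a N p q i)) =
      ∏ i ∈ Ico (a + 2) n, g i (x (i + 2 * N - 2)) := by
    refine Finset.prod_congr rfl fun i hi => ?_
    have hi2 := (Finset.mem_Ico.1 hi).1
    have : eSwap a N p q i = i + 2 * N - 2 := by
      unfold eSwap
      rw [if_neg (by omega), if_neg (by omega), if_neg (by omega)]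
    rw [this]
  rw [h1, h2, h3, h4]
  ring


lemma block_meas (v : Λ → ℝ) (hv : Measurable v) (N c : ℕ) :
    Measurable fun x : ℕ → Λ => (N : ℝ)⁻¹ * ∑ q ∈ range N, v (x (c + q)) :=
  (Finset.measurable_sum _ fun q _ => hv.comp (measurable_pi_apply _)).const_mul _

lemma block_nonneg (v : Λ → ℝ) (hv0 : ∀ y, 0 ≤ v y) (N c : ℕ) (x : ℕ → Λ) :
    0 ≤ (N : ℝ)⁻¹ * ∑ q ∈ range N, v (x (c + q)) :=
  mul_nonneg (inv_nonneg.2 (Nat.cast_nonneg N)) (Finset.sum_nonneg fun q _ => hv0 _)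

lemma block_le_one (v : Λ → ℝ) (hv1 : ∀ y, v y ≤ 1) {N : ℕ} (hN : 0 < N) (c : ℕ)
    (x : ℕ → Λ) : (N : ℝ)⁻¹ * ∑ q ∈ range N, v (x (c + q)) ≤ 1 := by
  have hsum : ∑ q ∈ range N, v (x (c + q)) ≤ (N : ℝ) := by
    calc ∑ q ∈ range N, v (x (c + q)) ≤ ∑ q ∈ range N, (1 : ℝ) :=
      Finset.sum_le_sum fun q _ => hv1 _
    _ = N := by simp
  have hNpos : (0 : ℝ) < N := Nat.cast_pos.2 hN
  calc (N : ℝ)⁻¹ * ∑ q ∈ range N, v (x (c + q)) ≤ (N : ℝ)⁻¹ * N :=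
    mul_le_mul_of_nonneg_left hsum (inv_nonneg.2 hNpos.le)
  _ = 1 := inv_mul_cancel₀ hNpos.ne'


def boxes (Λ : Type*) [MeasurableSpace Λ] : Set (Set (ℕ → Λ)) :=
  {S | ∃ (n : ℕ) (t : ℕ → Set Λ), (∀ i, MeasurableSet (t i)) ∧
    S = {x | ∀ i < n, x i ∈ t i}}

lemma box_meas {n : ℕ} {t : ℕ → Set Λ} (ht : ∀ i, MeasurableSet (t i)) :
    MeasurableSet {x : ℕ → Λ | ∀ i < n, x i ∈ t i} := by
  have : {x : ℕ → Λ | ∀ i < n, x i ∈ t i} = ⋂ i ∈ Set.Iio n, (fun x => x i) ⁻¹' t i := by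
    ext x; simp [Set.mem_iInter]
  rw [this]
  exact MeasurableSet.biInter (Set.to_countable _)
    fun i _ => (measurable_pi_apply i) (ht i)

lemma isPiSystem_boxes : IsPiSystem (boxes Λ) := by
  rintro S1 ⟨n1, t1, ht1, rfl⟩ S2 ⟨n2, t2, ht2, rfl⟩ -
  refine ⟨max n1 n2, fun i => (if i < n1 then t1 i else Set.univ) ∩
      (if i < n2 then t2 i else Set.univ), fun i => ?_, ?_⟩
  · apply MeasurableSet.inter <;> split_ifs <;>
      first | exact ht1 _ | exact ht2 _ | exact MeasurableSet.univ
  · ext x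
    simp only [Set.mem_inter_iff, Set.mem_setOf_eq]
    constructor
    · rintro ⟨h1, h2⟩ i hi
      constructor
      · split_ifs with h
        · exact h1 i h
        · trivial
      · split_ifs with h
        · exact h2 i h
        · trivial
    · intro h
      constructor
      · intro i hi
        have := (h i (lt_of_lt_of_le hi (le_max_left _ _))).1
        rwa [if_pos hi] at this
      · intro i hi
        have := (h i (lt_of_lt_of_le hi (le_max_right _ _))).2
        rwa [if_pos hi] at this

lemma pi_eq_generateFrom_boxes :
    (inferInstance : MeasurableSpace (ℕ → Λ)) = MeasurableSpace.generateFrom (boxes Λ) := by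
  refine le_antisymm ?_ (MeasurableSpace.generateFrom_le ?_)
  · have hm : ∀ i : ℕ, @Measurable (ℕ → Λ) Λ (MeasurableSpace.generateFrom (boxes Λ)) _
        (fun x => x i) := by
      intro i s hs
      apply MeasurableSpace.measurableSet_generateFrom
      refine ⟨i + 1, fun j => if j = i then s else Set.univ, fun j => ?_, ?_⟩
      · dsimp only; split_ifs
        · exact hs
        · exact MeasurableSet.univ
      · ext x
        simp only [Set.mem_preimage, Set.mem_setOf_eq]
        constructor
        · intro hx j hj
          split_ifs with h
          · subst h; exact hx
          · trivial
        · intro h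
          have := h i (Nat.lt_succ_self i)
          rwa [if_pos rfl] at this
    exact iSup_le fun i => (hm i).comap_le
  · rintro S ⟨n, t, ht, rfl⟩
    exact box_meas ht

lemma ext_boxes (μ ν : Measure (ℕ → Λ)) [IsProbabilityMeasure μ] [IsProbabilityMeasure ν]
    (h : ∀ (n : ℕ) (t : ℕ → Set Λ), (∀ i, MeasurableSet (t i)) →
      μ {x | ∀ i < n, x i ∈ t i} = ν {x | ∀ i < n, x i ∈ t i}) : μ = ν := by
  refine ext_of_generate_finite (boxes Λ) pi_eq_generateFrom_boxes isPiSystem_boxes ?_ (by simp)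
  rintro S ⟨n, t, ht, rfl⟩
  exact h n t ht


section Analytic

variable (m : Measure (ℕ → Λ)) [IsProbabilityMeasure m]

lemma integrable_bdd {f : (ℕ → Λ) → ℝ} (hf : Measurable f) {C : ℝ} (h : ∀ x, |f x| ≤ C) :
    Integrable f m :=
  (integrable_const C).mono' hf.aestronglyMeasurable
    (Filter.Eventually.of_forall (by simpa [Real.norm_eq_abs] using h))

variable (hc : ∀ σ : ℕ → ℕ, StrictMono σ → Measure.map (fun x : ℕ → Λ => x ∘ σ) m = m)

include hc

lemma spread (n : ℕ) (g : ℕ → Λ → ℝ) (hg : ∀ i, Measurable (g i))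
    {e : ℕ → ℕ} (he : StrictMono e) :
    ∫ x, ∏ i ∈ range n, g i (x (e i)) ∂m = ∫ x, ∏ i ∈ range n, g i (x i) ∂m := by
  have hF : Measurable fun x : ℕ → Λ => ∏ i ∈ range n, g i (x i) :=
    Finset.measurable_prod _ fun i _ => (hg i).comp (measurable_pi_apply i)
  have h2 := integral_map (μ := m) (φ := fun x : ℕ → Λ => x ∘ e)
      (meas_comp e).aemeasurable (f := fun x => ∏ i ∈ range n, g i (x i))
      hF.aestronglyMeasurable
  rw [hc e he] at h2
  simp only [Function.comp] at h2
  exact h2.symm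

lemma single (h : Λ → ℝ) (hm : Measurable h) (p : ℕ) :
    ∫ x, h (x p) ∂m = ∫ x, h (x 0) ∂m := by
  have he : StrictMono fun i => p + i := strictMono_nat_of_lt_succ fun i => by omega
  have := spread m hc 1 (fun _ => h) (fun _ => hm) he
  simpa using this

lemma pair (h h' : Λ → ℝ) (hm : Measurable h) (hm' : Measurable h') {p q : ℕ} (hpq : p < q) :
    ∫ x, h (x p) * h' (x q) ∂m = ∫ x, h (x 0) * h' (x 1) ∂m := by
  have he : StrictMono fun i : ℕ => if i = 0 then p else q + i - 1 := by
    apply strictMono_nat_of_lt_succ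
    intro i
    rcases i with _ | i <;> simp <;> omega
  have := spread m hc 2 (fun i => if i = 0 then h else h') (fun i => by split_ifs <;> assumption) he
  simpa [Finset.prod_range_succ] using this

lemma avg_claim (a n N : ℕ) (han : a + 2 ≤ n) (hN : 0 < N)
    (g : ℕ → Λ → ℝ) (hg : ∀ i, Measurable (g i)) (hg0 : ∀ i y, 0 ≤ g i y)
    (hg1 : ∀ i y, g i y ≤ 1) :
    ∫ x, ((∏ i ∈ range a, g i (x i)) * ∏ i ∈ Ico (a + 2) n, g i (x (i + 2 * N - 2))) *
        (((N : ℝ)⁻¹ * ∑ p ∈ range N, g a (x (a + p))) *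
          ((N : ℝ)⁻¹ * ∑ q ∈ range N, g (a + 1) (x (a + N + q)))) ∂m
      = ∫ x, ∏ i ∈ range n, g i (x i) ∂m := by
  have hTmeas : ∀ p q : ℕ, Measurable fun x : ℕ → Λ =>
      ∏ i ∈ range n, g i (x (eSwap a N p q i)) := fun p q =>
    Finset.measurable_prod _ fun i _ => (hg i).comp (measurable_pi_apply _)
  have hTbd : ∀ p q : ℕ, ∀ x : ℕ → Λ,
      |∏ i ∈ range n, g i (x (eSwap a N p q i))| ≤ 1 := by
    intro p q x
    rw [abs_of_nonneg (Finset.prod_nonneg fun i _ => hg0 i _)]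
    exact Finset.prod_le_one (fun i _ => hg0 i _) (fun i _ => hg1 i _)
  have hTint : ∀ p q : ℕ, Integrable
      (fun x : ℕ → Λ => ∏ i ∈ range n, g i (x (eSwap a N p q i))) m :=
    fun p q => integrable_bdd m (hTmeas p q) (hTbd p q)
  have key : ∀ x : ℕ → Λ,
      ((∏ i ∈ range a, g i (x i)) * ∏ i ∈ Ico (a + 2) n, g i (x (i + 2 * N - 2))) *
        (((N : ℝ)⁻¹ * ∑ p ∈ range N, g a (x (a + p))) *
          ((N : ℝ)⁻¹ * ∑ q ∈ range N, g (a + 1) (x (a + N + q)))) =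
      (N : ℝ)⁻¹ * ((N : ℝ)⁻¹ * ∑ p ∈ range N, ∑ q ∈ range N,
        ∏ i ∈ range n, g i (x (eSwap a N p q i))) := by
    intro x
    have hpe : ∀ p q : ℕ, ∏ i ∈ range n, g i (x (eSwap a N p q i)) =
        (g a (x (a + p)) * g (a + 1) (x (a + N + q))) *
          ((∏ i ∈ range a, g i (x i)) * ∏ i ∈ Ico (a + 2) n, g i (x (i + 2 * N - 2))) :=
      fun p q => prod_eSwap a n N p q han g x
    simp only [hpe]
    simp only [← Finset.sum_mul]
    rw [← Finset.sum_mul_sum]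
    ring
  have keyfun : (fun x : ℕ → Λ =>
      ((∏ i ∈ range a, g i (x i)) * ∏ i ∈ Ico (a + 2) n, g i (x (i + 2 * N - 2))) *
        (((N : ℝ)⁻¹ * ∑ p ∈ range N, g a (x (a + p))) *
          ((N : ℝ)⁻¹ * ∑ q ∈ range N, g (a + 1) (x (a + N + q))))) =
      fun x : ℕ → Λ => (N : ℝ)⁻¹ * ((N : ℝ)⁻¹ * ∑ p ∈ range N, ∑ q ∈ range N,
        ∏ i ∈ range n, g i (x (eSwap a N p q i))) := funext key
  rw [keyfun, integral_const_mul, integral_const_mul,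
    integral_finset_sum _ (fun p _ => integrable_finset_sum _ fun q _ => hTint p q),
    Finset.sum_congr rfl (fun p hp => (integral_finset_sum _ fun q _ => hTint p q).trans
      (Finset.sum_congr rfl (fun q hq =>
        spread m hc n g hg (eSwap_mono (mem_range.1 hp) (mem_range.1 hq)))))]
  rw [Finset.sum_const, Finset.sum_const, card_range]
  have hNne : (N : ℝ) ≠ 0 := Nat.cast_ne_zero.2 hN.ne'
  simp only [nsmul_eq_mul]
  field_simp

lemma if_integral (v : Λ → ℝ) (hv : Measurable v) (i j : ℕ) :
    ∫ x, v (x i) * v (x j) ∂m =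
      if i = j then ∫ x, v (x 0) * v (x 0) ∂m else ∫ x, v (x 0) * v (x 1) ∂m := by
  rcases lt_trichotomy i j with h | h | h
  · rw [if_neg h.ne]; exact pair m hc v v hv hv h
  · rw [if_pos h]; subst h
    exact single m hc (fun y => v y * v y) (hv.mul hv) i
  · rw [if_neg h.ne']
    have heq : (fun x : ℕ → Λ => v (x i) * v (x j)) = fun x => v (x j) * v (x i) :=
      funext fun _ => mul_comm _ _
    rw [heq]
    exact pair m hc v v hv hv h

lemma block_cross (v : Λ → ℝ) (hv : Measurable v) (hv0 : ∀ y, 0 ≤ v y) (hv1 : ∀ y, v y ≤ 1)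
    (N : ℕ) (c d : ℕ) :
    ∫ x, ((N : ℝ)⁻¹ * ∑ p ∈ range N, v (x (c + p))) *
        ((N : ℝ)⁻¹ * ∑ q ∈ range N, v (x (d + q))) ∂m
      = (N : ℝ)⁻¹ * ((N : ℝ)⁻¹ * ∑ p ∈ range N, ∑ q ∈ range N,
          (if c + p = d + q then ∫ x, v (x 0) * v (x 0) ∂m
            else ∫ x, v (x 0) * v (x 1) ∂m)) := by
  have hint : ∀ i j : ℕ, Integrable (fun x : ℕ → Λ => v (x i) * v (x j)) m := by
    intro i j
    refine integrable_bdd m ((hv.comp (measurable_pi_apply i)).mul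
      (hv.comp (measurable_pi_apply j))) (C := 1) fun x => ?_
    rw [abs_of_nonneg (mul_nonneg (hv0 _) (hv0 _))]
    exact mul_le_one₀ (hv1 _) (hv0 _) (hv1 _)
  have key : (fun x : ℕ → Λ => ((N : ℝ)⁻¹ * ∑ p ∈ range N, v (x (c + p))) *
      ((N : ℝ)⁻¹ * ∑ q ∈ range N, v (x (d + q)))) =
      fun x => (N : ℝ)⁻¹ * ((N : ℝ)⁻¹ * ∑ p ∈ range N, ∑ q ∈ range N,
        v (x (c + p)) * v (x (d + q))) := by
    funext x
    have h2 : (∑ p ∈ range N, v (x (c + p))) * (∑ q ∈ range N, v (x (d + q)))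
        = ∑ p ∈ range N, ∑ q ∈ range N, v (x (c + p)) * v (x (d + q)) :=
      Finset.sum_mul_sum _ _ _ _
    rw [← h2]
    ring
  rw [key, integral_const_mul, integral_const_mul,
    integral_finset_sum _ (fun p _ => integrable_finset_sum _ fun q _ => hint _ _),
    Finset.sum_congr rfl (fun p _ => (integral_finset_sum _ fun q _ => hint _ _).trans
      (Finset.sum_congr rfl fun q _ => if_integral m hc v hv (c + p) (d + q)))]

lemma cross_eval (v : Λ → ℝ) (hv : Measurable v) (hv0 : ∀ y, 0 ≤ v y) (hv1 : ∀ y, v y ≤ 1)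
    {N : ℕ} (hN : 0 < N) {c d : ℕ}
    (hdisj : ∀ p q : ℕ, p < N → q < N → c + p ≠ d + q) :
    ∫ x, ((N : ℝ)⁻¹ * ∑ p ∈ range N, v (x (c + p))) *
        ((N : ℝ)⁻¹ * ∑ q ∈ range N, v (x (d + q))) ∂m
      = ∫ x, v (x 0) * v (x 1) ∂m := by
  rw [block_cross m hc v hv hv0 hv1 N c d]
  rw [Finset.sum_congr rfl (fun p hp => Finset.sum_congr rfl fun q hq =>
    if_neg (hdisj p q (mem_range.1 hp) (mem_range.1 hq)))]
  rw [Finset.sum_const, Finset.sum_const, card_range]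
  have hNne : (N : ℝ) ≠ 0 := Nat.cast_ne_zero.2 hN.ne'
  simp only [nsmul_eq_mul]
  field_simp

lemma same_eval (v : Λ → ℝ) (hv : Measurable v) (hv0 : ∀ y, 0 ≤ v y) (hv1 : ∀ y, v y ≤ 1)
    {N : ℕ} (hN : 0 < N) (c : ℕ) :
    ∫ x, ((N : ℝ)⁻¹ * ∑ p ∈ range N, v (x (c + p))) *
        ((N : ℝ)⁻¹ * ∑ q ∈ range N, v (x (c + q))) ∂m
      = (∫ x, v (x 0) * v (x 1) ∂m) +
        ((∫ x, v (x 0) * v (x 0) ∂m) - ∫ x, v (x 0) * v (x 1) ∂m) * (N : ℝ)⁻¹ := by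
  set δ := ∫ x, v (x 0) * v (x 0) ∂m with hδ
  set γ := ∫ x, v (x 0) * v (x 1) ∂m with hγ
  rw [block_cross m hc v hv hv0 hv1 N c c]
  have hinner : ∀ p ∈ range N, (∑ q ∈ range N, if c + p = c + q then δ else γ)
      = (N : ℝ) * γ + (δ - γ) := by
    intro p hp
    have h1 : ∀ q ∈ range N, (if c + p = c + q then δ else γ)
        = γ + (if q = p then δ - γ else 0) := by
      intro q _
      by_cases h : q = p
      · subst h; simp
      · rw [if_neg (by omega), if_neg h]; ring
    rw [Finset.sum_congr rfl h1, Finset.sum_add_distrib, Finset.sum_const, card_range,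
      Finset.sum_ite_eq' (range N) p fun _ => δ - γ, if_pos hp, nsmul_eq_mul]
  rw [Finset.sum_congr rfl hinner, Finset.sum_const, card_range]
  have hNne : (N : ℝ) ≠ 0 := Nat.cast_ne_zero.2 hN.ne'
  simp only [nsmul_eq_mul]
  field_simp

lemma block_diff_sq (v : Λ → ℝ) (hv : Measurable v) (hv0 : ∀ y, 0 ≤ v y)
    (hv1 : ∀ y, v y ≤ 1) {N : ℕ} (hN : 0 < N) {c d : ℕ} (hcd : c + N ≤ d) :
    ∫ x, (((N : ℝ)⁻¹ * ∑ q ∈ range N, v (x (d + q)))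
        - ((N : ℝ)⁻¹ * ∑ q ∈ range N, v (x (c + q)))) ^ 2 ∂m ≤ 2 / N := by
  set δ := ∫ x, v (x 0) * v (x 0) ∂m with hδdef
  set γ := ∫ x, v (x 0) * v (x 1) ∂m with hγdef
  set Bc := fun x : ℕ → Λ => (N : ℝ)⁻¹ * ∑ q ∈ range N, v (x (c + q)) with hBc
  set Bd := fun x : ℕ → Λ => (N : ℝ)⁻¹ * ∑ q ∈ range N, v (x (d + q)) with hBd
  have hBcm := block_meas (Λ := Λ) v hv N c
  have hBdm := block_meas (Λ := Λ) v hv N d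
  have hint : ∀ (f g : (ℕ → Λ) → ℝ), Measurable f → Measurable g →
      (∀ x, 0 ≤ f x) → (∀ x, f x ≤ 1) → (∀ x, 0 ≤ g x) → (∀ x, g x ≤ 1) →
      Integrable (fun x => f x * g x) m := by
    intro f g hf hg h0 h1 h0' h1'
    refine integrable_bdd m (hf.mul hg) (C := 1) fun x => ?_
    rw [abs_of_nonneg (mul_nonneg (h0 x) (h0' x))]
    exact mul_le_one₀ (h1 x) (h0' x) (h1' x)
  have hBc0 := block_nonneg (Λ := Λ) v hv0 N c
  have hBc1 := block_le_one (Λ := Λ) v hv1 hN c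
  have hBd0 := block_nonneg (Λ := Λ) v hv0 N d
  have hBd1 := block_le_one (Λ := Λ) v hv1 hN d
  have idd : Integrable (fun x => Bd x * Bd x) m := hint _ _ hBdm hBdm hBd0 hBd1 hBd0 hBd1
  have icc : Integrable (fun x => Bc x * Bc x) m := hint _ _ hBcm hBcm hBc0 hBc1 hBc0 hBc1
  have icd : Integrable (fun x => Bc x * Bd x) m := hint _ _ hBcm hBdm hBc0 hBc1 hBd0 hBd1
  have idc : Integrable (fun x => Bd x * Bc x) m := hint _ _ hBdm hBcm hBd0 hBd1 hBc0 hBc1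
  have hpt : (fun x => (Bd x - Bc x) ^ 2) =
      fun x => Bd x * Bd x + Bc x * Bc x - (Bc x * Bd x + Bd x * Bc x) :=
    funext fun x => by ring
  have i1 : Integrable (fun x => Bd x * Bd x + Bc x * Bc x) m := by exact idd.add icc
  have i2 : Integrable (fun x => Bc x * Bd x + Bd x * Bc x) m := by exact icd.add idc
  rw [hpt, integral_sub i1 i2, integral_add idd icc, integral_add icd idc]
  have hvv : ∫ x, Bd x * Bd x ∂m = γ + (δ - γ) * (N : ℝ)⁻¹ :=
    same_eval m hc v hv hv0 hv1 hN d
  have hcc : ∫ x, Bc x * Bc x ∂m = γ + (δ - γ) * (N : ℝ)⁻¹ :=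
    same_eval m hc v hv hv0 hv1 hN c
  have hcd1 : ∫ x, Bc x * Bd x ∂m = γ :=
    cross_eval m hc v hv hv0 hv1 hN fun p q hp hq => by omega
  have hdc1 : ∫ x, Bd x * Bc x ∂m = γ :=
    cross_eval m hc v hv hv0 hv1 hN fun p q hp hq => by omega
  rw [hvv, hcc, hcd1, hdc1]
  have hδ1 : δ ≤ 1 := by
    have hint0 : Integrable (fun x : ℕ → Λ => v (x 0) * v (x 0)) m := by
      refine integrable_bdd m ((hv.comp (measurable_pi_apply 0)).mul
        (hv.comp (measurable_pi_apply 0))) (C := 1) fun x => ?_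
      rw [abs_of_nonneg (mul_nonneg (hv0 _) (hv0 _))]
      exact mul_le_one₀ (hv1 _) (hv0 _) (hv1 _)
    calc δ ≤ ∫ _x, (1 : ℝ) ∂m :=
      integral_mono hint0 (integrable_const 1) fun x => mul_le_one₀ (hv1 _) (hv0 _) (hv1 _)
    _ = 1 := by simp
  have hγ0 : 0 ≤ γ := integral_nonneg fun x => mul_nonneg (hv0 _) (hv0 _)
  have hNpos : (0 : ℝ) < N := Nat.cast_pos.2 hN
  rw [div_eq_mul_inv]
  nlinarith [inv_nonneg.2 hNpos.le]

lemma l1_le_sqrt_l2 (f : (ℕ → Λ) → ℝ) (hf : Measurable f) (hbd : ∀ x, |f x| ≤ 1) :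
    ∫ x, |f x| ∂m ≤ Real.sqrt (∫ x, f x ^ 2 ∂m) := by
  have hif : Integrable f m := integrable_bdd m hf hbd
  have hia : Integrable (fun x => |f x|) m := hif.abs
  have hisq : Integrable (fun x => f x ^ 2) m := by
    refine integrable_bdd m (hf.pow_const 2) (C := 1) fun x => ?_
    rw [abs_pow]
    calc |f x| ^ 2 ≤ 1 ^ 2 := pow_le_pow_left₀ (abs_nonneg _) (hbd x) 2
    _ = 1 := one_pow 2
  set I := ∫ x, |f x| ∂m with hI
  apply Real.le_sqrt_of_sq_le
  have h0 : 0 ≤ ∫ x, (|f x| - I) ^ 2 ∂m := integral_nonneg fun x => sq_nonneg _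
  have hexp : ∫ x, (|f x| - I) ^ 2 ∂m = (∫ x, f x ^ 2 ∂m) - 2 * I * I + I ^ 2 := by
    have hpt : (fun x => (|f x| - I) ^ 2) =
        fun x => f x ^ 2 - 2 * I * |f x| + I ^ 2 := by
      funext x
      rw [sub_sq, sq_abs]
      ring
    have h1 : Integrable (fun x => f x ^ 2 - 2 * I * |f x|) m := by
      exact hisq.sub (hia.const_mul _)
    have h3 : Integrable (fun x => 2 * I * |f x|) m := by
      exact hia.const_mul _
    rw [hpt, integral_add h1 (integrable_const _), integral_sub hisq h3,
      integral_const_mul, integral_const]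
    simp [measure_univ, hI]
  nlinarith [h0, hexp]

lemma swap_integral (a n : ℕ) (han : a + 2 ≤ n) (g : ℕ → Λ → ℝ)
    (hg : ∀ i, Measurable (g i)) (hg0 : ∀ i y, 0 ≤ g i y) (hg1 : ∀ i y, g i y ≤ 1) :
    ∫ x, ∏ i ∈ range n, g i (x (Equiv.swap a (a + 1) i)) ∂m
      = ∫ x, ∏ i ∈ range n, g i (x i) ∂m := by
  have hτa : Equiv.swap a (a + 1) a = a + 1 := Equiv.swap_apply_left _ _
  have hτa1 : Equiv.swap a (a + 1) (a + 1) = a := Equiv.swap_apply_right _ _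
  have hτoff : ∀ i : ℕ, i ≠ a → i ≠ a + 1 → Equiv.swap a (a + 1) i = i := fun i h1 h2 =>
    Equiv.swap_apply_of_ne_of_ne h1 h2
  have hfin : ∀ N : ℕ, 0 < N →
      |(∫ x, ∏ i ∈ range n, g i (x (Equiv.swap a (a + 1) i)) ∂m)
        - ∫ x, ∏ i ∈ range n, g i (x i) ∂m| ≤ 2 * Real.sqrt (2 / N) := by
    intro N hN
    have claim1 := avg_claim m hc a n N han hN g hg hg0 hg1
    have claim2 := avg_claim m hc a n N han hN (fun i => g (Equiv.swap a (a + 1) i))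
      (fun i => hg _) (fun i y => hg0 _ _) (fun i y => hg1 _ _)
    simp only [hτa, hτa1] at claim2
    have hA : ∀ x : ℕ → Λ, ∏ i ∈ range a, g (Equiv.swap a (a + 1) i) (x i)
        = ∏ i ∈ range a, g i (x i) := by
      intro x
      refine Finset.prod_congr rfl fun i hi => ?_
      have := mem_range.1 hi
      rw [hτoff i (by omega) (by omega)]
    have hB : ∀ x : ℕ → Λ, ∏ i ∈ Ico (a + 2) n, g (Equiv.swap a (a + 1) i) (x (i + 2 * N - 2))
        = ∏ i ∈ Ico (a + 2) n, g i (x (i + 2 * N - 2)) := by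
      intro x
      refine Finset.prod_congr rfl fun i hi => ?_
      have := (Finset.mem_Ico.1 hi).1
      rw [hτoff i (by omega) (by omega)]
    have hR : ∀ x : ℕ → Λ, ∏ i ∈ range n, g (Equiv.swap a (a + 1) i) (x i)
        = ∏ i ∈ range n, g i (x (Equiv.swap a (a + 1) i)) := by
      intro x
      have hmem : a ∈ range n := mem_range.2 (by omega)
      have hmem1 : a + 1 ∈ (range n).erase a := by
        rw [Finset.mem_erase]; exact ⟨by omega, mem_range.2 (by omega)⟩
      rw [← Finset.prod_erase_mul (range n) (fun i => g (Equiv.swap a (a + 1) i) (x i)) hmem,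
        ← Finset.prod_erase_mul _ (fun i => g (Equiv.swap a (a + 1) i) (x i)) hmem1,
        ← Finset.prod_erase_mul (range n) (fun i => g i (x (Equiv.swap a (a + 1) i))) hmem,
        ← Finset.prod_erase_mul _ (fun i => g i (x (Equiv.swap a (a + 1) i))) hmem1]
      have hsame : ∏ i ∈ ((range n).erase a).erase (a + 1),
            g (Equiv.swap a (a + 1) i) (x i)
          = ∏ i ∈ ((range n).erase a).erase (a + 1), g i (x (Equiv.swap a (a + 1) i)) := by
        refine Finset.prod_congr rfl fun i hi => ?_
        have h2 := Finset.mem_erase.1 hi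
        have h3 := Finset.mem_erase.1 h2.2
        rw [hτoff i h3.1 h2.1]
      rw [hsame, hτa, hτa1]
      ring
    simp only [hA, hB, hR] at claim2
    -- now claim2 : ∫ AB * (W * Z) = L, claim1 : ∫ AB * (U * V) = R
    rw [← claim2, ← claim1]
    -- abbreviations
    set AB := fun x : ℕ → Λ =>
      (∏ i ∈ range a, g i (x i)) * ∏ i ∈ Ico (a + 2) n, g i (x (i + 2 * N - 2)) with hAB
    set U := fun x : ℕ → Λ => (N : ℝ)⁻¹ * ∑ p ∈ range N, g a (x (a + p)) with hU
    set V := fun x : ℕ → Λ => (N : ℝ)⁻¹ * ∑ q ∈ range N, g (a + 1) (x (a + N + q)) with hV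
    set W := fun x : ℕ → Λ => (N : ℝ)⁻¹ * ∑ p ∈ range N, g (a + 1) (x (a + p)) with hW
    set Z := fun x : ℕ → Λ => (N : ℝ)⁻¹ * ∑ q ∈ range N, g a (x (a + N + q)) with hZ
    have hABm : Measurable AB := (Finset.measurable_prod _ fun i _ =>
      (hg i).comp (measurable_pi_apply _)).mul
      (Finset.measurable_prod _ fun i _ => (hg i).comp (measurable_pi_apply _))
    have hAB0 : ∀ x, 0 ≤ AB x := fun x => mul_nonneg
      (Finset.prod_nonneg fun i _ => hg0 _ _) (Finset.prod_nonneg fun i _ => hg0 _ _)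
    have hAB1 : ∀ x, AB x ≤ 1 := fun x => mul_le_one₀
      (Finset.prod_le_one (fun i _ => hg0 _ _) fun i _ => hg1 _ _)
      (Finset.prod_nonneg fun i _ => hg0 _ _)
      (Finset.prod_le_one (fun i _ => hg0 _ _) fun i _ => hg1 _ _)
    have hUm : Measurable U := block_meas (Λ := Λ) (g a) (hg a) N a
    have hVm : Measurable V := block_meas (Λ := Λ) (g (a + 1)) (hg (a + 1)) N (a + N)
    have hWm : Measurable W := block_meas (Λ := Λ) (g (a + 1)) (hg (a + 1)) N a
    have hZm : Measurable Z := block_meas (Λ := Λ) (g a) (hg a) N (a + N)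
    have hU0 : ∀ x, 0 ≤ U x := block_nonneg (Λ := Λ) (g a) (fun y => hg0 _ _) N a
    have hV0 : ∀ x, 0 ≤ V x := block_nonneg (Λ := Λ) (g (a + 1)) (fun y => hg0 _ _) N (a + N)
    have hW0 : ∀ x, 0 ≤ W x := block_nonneg (Λ := Λ) (g (a + 1)) (fun y => hg0 _ _) N a
    have hZ0 : ∀ x, 0 ≤ Z x := block_nonneg (Λ := Λ) (g a) (fun y => hg0 _ _) N (a + N)
    have hU1 : ∀ x, U x ≤ 1 := block_le_one (Λ := Λ) (g a) (fun y => hg1 _ _) hN a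
    have hV1 : ∀ x, V x ≤ 1 := block_le_one (Λ := Λ) (g (a + 1)) (fun y => hg1 _ _) hN (a + N)
    have hW1 : ∀ x, W x ≤ 1 := block_le_one (Λ := Λ) (g (a + 1)) (fun y => hg1 _ _) hN a
    have hZ1 : ∀ x, Z x ≤ 1 := block_le_one (Λ := Λ) (g a) (fun y => hg1 _ _) hN (a + N)
    have hX1int : Integrable (fun x => AB x * (U x * V x)) m := by
      refine integrable_bdd m (hABm.mul (hUm.mul hVm)) (C := 1) fun x => ?_
      rw [abs_of_nonneg (mul_nonneg (hAB0 x) (mul_nonneg (hU0 x) (hV0 x)))]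
      exact mul_le_one₀ (hAB1 x) (mul_nonneg (hU0 x) (hV0 x))
        (mul_le_one₀ (hU1 x) (hV0 x) (hV1 x))
    have hX2int : Integrable (fun x => AB x * (W x * Z x)) m := by
      refine integrable_bdd m (hABm.mul (hWm.mul hZm)) (C := 1) fun x => ?_
      rw [abs_of_nonneg (mul_nonneg (hAB0 x) (mul_nonneg (hW0 x) (hZ0 x)))]
      exact mul_le_one₀ (hAB1 x) (mul_nonneg (hW0 x) (hZ0 x))
        (mul_le_one₀ (hW1 x) (hZ0 x) (hZ1 x))
    have hWV : Integrable (fun x => |W x - V x|) m := by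
      refine (integrable_bdd m (hWm.sub hVm) (C := 1) fun x => ?_).abs
      rw [Pi.sub_apply, abs_sub_le_iff]
      constructor <;> linarith [hW0 x, hW1 x, hV0 x, hV1 x]
    have hZU : Integrable (fun x => |Z x - U x|) m := by
      refine (integrable_bdd m (hZm.sub hUm) (C := 1) fun x => ?_).abs
      rw [Pi.sub_apply, abs_sub_le_iff]
      constructor <;> linarith [hZ0 x, hZ1 x, hU0 x, hU1 x]
    have hptwise : ∀ x, |AB x * (W x * Z x) - AB x * (U x * V x)|
        ≤ |W x - V x| + |Z x - U x| := by
      intro x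
      have h1 : |AB x * (W x * Z x) - AB x * (U x * V x)|
          = AB x * |W x * Z x - U x * V x| := by
        rw [← mul_sub, abs_mul, abs_of_nonneg (hAB0 x)]
      have h2 : |W x * Z x - U x * V x| ≤ |W x - V x| + |Z x - U x| := by
        have he : W x * Z x - U x * V x = Z x * (W x - V x) + V x * (Z x - U x) := by ring
        calc |W x * Z x - U x * V x| = |Z x * (W x - V x) + V x * (Z x - U x)| := by rw [he]
        _ ≤ |Z x * (W x - V x)| + |V x * (Z x - U x)| := abs_add_le _ _
        _ = Z x * |W x - V x| + V x * |Z x - U x| := by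
            rw [abs_mul (Z x) (W x - V x), abs_mul (V x) (Z x - U x),
              abs_of_nonneg (hZ0 x), abs_of_nonneg (hV0 x)]
        _ ≤ 1 * |W x - V x| + 1 * |Z x - U x| := add_le_add
            (mul_le_mul_of_nonneg_right (hZ1 x) (abs_nonneg _))
            (mul_le_mul_of_nonneg_right (hV1 x) (abs_nonneg _))
        _ = |W x - V x| + |Z x - U x| := by ring
      calc |AB x * (W x * Z x) - AB x * (U x * V x)|
          = AB x * |W x * Z x - U x * V x| := h1
      _ ≤ 1 * |W x * Z x - U x * V x| :=
          mul_le_mul_of_nonneg_right (hAB1 x) (abs_nonneg _)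
      _ = |W x * Z x - U x * V x| := one_mul _
      _ ≤ |W x - V x| + |Z x - U x| := h2
    have step1 : |(∫ x, AB x * (W x * Z x) ∂m) - ∫ x, AB x * (U x * V x) ∂m|
        ≤ (∫ x, |W x - V x| ∂m) + ∫ x, |Z x - U x| ∂m := by
      rw [← integral_sub hX2int hX1int]
      have habs : |∫ x, (AB x * (W x * Z x) - AB x * (U x * V x)) ∂m|
          ≤ ∫ x, |AB x * (W x * Z x) - AB x * (U x * V x)| ∂m := by
        simpa [Real.norm_eq_abs] using
          norm_integral_le_integral_norm (fun x => AB x * (W x * Z x) - AB x * (U x * V x)) (μ := m)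
      refine habs.trans ?_
      have hint2 : Integrable (fun x => |W x - V x| + |Z x - U x|) m := hWV.add hZU
      have := integral_mono (f := fun x => |AB x * (W x * Z x) - AB x * (U x * V x)|)
        (hX2int.sub hX1int).abs hint2 hptwise
      refine this.trans ?_
      rw [integral_add hWV hZU]
    have hWVsqrt : ∫ x, |W x - V x| ∂m ≤ Real.sqrt (2 / N) := by
      have hl1 := l1_le_sqrt_l2 m hc (fun x => W x - V x) (hWm.sub hVm) (fun x => by
        rw [abs_sub_le_iff]
        constructor <;> linarith [hW0 x, hW1 x, hV0 x, hV1 x])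
      refine hl1.trans ?_
      apply Real.sqrt_le_sqrt
      have hsw : (fun x => (W x - V x) ^ 2) = fun x => (V x - W x) ^ 2 :=
        funext fun x => by ring
      rw [hsw, hV, hW]
      exact block_diff_sq m hc (g (a + 1)) (hg _) (fun y => hg0 _ _) (fun y => hg1 _ _)
        hN (le_refl (a + N))
    have hZUsqrt : ∫ x, |Z x - U x| ∂m ≤ Real.sqrt (2 / N) := by
      have hl1 := l1_le_sqrt_l2 m hc (fun x => Z x - U x) (hZm.sub hUm) (fun x => by
        rw [abs_sub_le_iff]
        constructor <;> linarith [hZ0 x, hZ1 x, hU0 x, hU1 x])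
      refine hl1.trans ?_
      apply Real.sqrt_le_sqrt
      rw [hZ, hU]
      exact block_diff_sq m hc (g a) (hg _) (fun y => hg0 _ _) (fun y => hg1 _ _)
        hN (le_refl (a + N))
    calc |(∫ x, AB x * (W x * Z x) ∂m) - ∫ x, AB x * (U x * V x) ∂m|
        ≤ (∫ x, |W x - V x| ∂m) + ∫ x, |Z x - U x| ∂m := step1
    _ ≤ Real.sqrt (2 / N) + Real.sqrt (2 / N) := add_le_add hWVsqrt hZUsqrt
    _ = 2 * Real.sqrt (2 / N) := by ring
  -- conclude via limit N → ∞
  have htend : Filter.Tendsto (fun N : ℕ => 2 * Real.sqrt (2 / N)) Filter.atTop (nhds 0) := by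
    have h1 : Filter.Tendsto (fun N : ℕ => 2 / (N : ℝ)) Filter.atTop (nhds 0) :=
      tendsto_const_div_atTop_nhds_zero_nat 2
    have h2 := (Real.continuous_sqrt.tendsto 0).comp h1
    rw [Real.sqrt_zero] at h2
    have h3 := h2.const_mul (2 : ℝ)
    simpa using h3
  have hle : |(∫ x, ∏ i ∈ range n, g i (x (Equiv.swap a (a + 1) i)) ∂m)
      - ∫ x, ∏ i ∈ range n, g i (x i) ∂m| ≤ 0 := by
    refine ge_of_tendsto htend ?_
    filter_upwards [Filter.eventually_ge_atTop 1] with N hN1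
    exact hfin N hN1
  have := abs_nonpos_iff.1 hle
  linarith [sub_eq_zero.1 this]
omit hc in
lemma indicator_prod (n : ℕ) (t : ℕ → Set Λ) (k : ℕ → ℕ) (x : ℕ → Λ) :
    ∏ i ∈ range n, (t i).indicator (fun _ => (1 : ℝ)) (x (k i))
      = Set.indicator {y : ℕ → Λ | ∀ i < n, y (k i) ∈ t i} (fun _ => (1 : ℝ)) x := by
  by_cases h : ∀ i < n, x (k i) ∈ t i
  · rw [Set.indicator_of_mem (show x ∈ {y : ℕ → Λ | ∀ i < n, y (k i) ∈ t i} from h)]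
    exact Finset.prod_eq_one fun i hi => Set.indicator_of_mem (h i (mem_range.1 hi)) _
  · rw [Set.indicator_of_notMem (show x ∉ {y : ℕ → Λ | ∀ i < n, y (k i) ∈ t i} from h)]
    push_neg at h
    obtain ⟨i, hi, hnot⟩ := h
    exact Finset.prod_eq_zero (mem_range.2 hi) (Set.indicator_of_notMem hnot _)

omit hc in
lemma box_meas_k {n : ℕ} {t : ℕ → Set Λ} (ht : ∀ i, MeasurableSet (t i)) (k : ℕ → ℕ) :
    MeasurableSet {x : ℕ → Λ | ∀ i < n, x (k i) ∈ t i} := by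
  have : {x : ℕ → Λ | ∀ i < n, x (k i) ∈ t i}
      = ⋂ i ∈ Set.Iio n, (fun x : ℕ → Λ => x (k i)) ⁻¹' t i := by
    ext x; simp [Set.mem_iInter]
  rw [this]
  exact MeasurableSet.biInter (Set.to_countable _)
    fun i _ => (measurable_pi_apply (k i)) (ht i)

omit [IsProbabilityMeasure m] hc in
lemma measure_box_eq_integral (n : ℕ) (t : ℕ → Set Λ) (ht : ∀ i, MeasurableSet (t i))
    (k : ℕ → ℕ) :
    (m {x | ∀ i < n, x (k i) ∈ t i}).toReal
      = ∫ x, ∏ i ∈ range n, (t i).indicator (fun _ => (1 : ℝ)) (x (k i)) ∂m := by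
  have hfe : (fun x : ℕ → Λ => ∏ i ∈ range n, (t i).indicator (fun _ => (1 : ℝ)) (x (k i)))
      = Set.indicator {y : ℕ → Λ | ∀ i < n, y (k i) ∈ t i} (fun _ => (1 : ℝ)) :=
    funext (indicator_prod n t k)
  rw [hfe, integral_indicator_const (1 : ℝ) (box_meas_k ht k)]
  simp [Measure.real]

lemma adj_swap (a : ℕ) :
    Measure.map (fun x : ℕ → Λ => x ∘ (Equiv.swap a (a + 1) : ℕ → ℕ)) m = m := by
  have hmeas : Measurable fun x : ℕ → Λ => x ∘ (⇑(Equiv.swap a (a + 1))) := meas_comp _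
  haveI : IsProbabilityMeasure
      (Measure.map (fun x : ℕ → Λ => x ∘ (⇑(Equiv.swap a (a + 1)))) m) :=
    Measure.isProbabilityMeasure_map hmeas.aemeasurable
  refine ext_boxes _ m ?_
  intro n t ht
  rw [Measure.map_apply hmeas (box_meas ht)]
  set n' := max n (a + 2) with hn'
  set t' : ℕ → Set Λ := fun i => if i < n then t i else Set.univ with ht'
  have ht'meas : ∀ i, MeasurableSet (t' i) := fun i => by
    rw [ht']; dsimp only; split_ifs; exacts [ht i, MeasurableSet.univ]
  have hset1 : ((fun x : ℕ → Λ => x ∘ (⇑(Equiv.swap a (a + 1)))) ⁻¹' {x | ∀ i < n, x i ∈ t i})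
      = {x : ℕ → Λ | ∀ i < n', x (Equiv.swap a (a + 1) i) ∈ t' i} := by
    ext x
    simp only [Set.mem_preimage, Set.mem_setOf_eq, Function.comp]
    constructor
    · intro h i hi
      rw [ht']; dsimp only; split_ifs with h2
      · exact h i h2
      · trivial
    · intro h i hi
      have := h i (lt_of_lt_of_le hi (le_max_left _ _))
      rw [ht'] at this; dsimp only at this; rwa [if_pos hi] at this
  have hset2 : {x : ℕ → Λ | ∀ i < n, x i ∈ t i} = {x : ℕ → Λ | ∀ i < n', x i ∈ t' i} := by
    ext x
    simp only [Set.mem_setOf_eq]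
    constructor
    · intro h i hi
      rw [ht']; dsimp only; split_ifs with h2
      · exact h i h2
      · trivial
    · intro h i hi
      have := h i (lt_of_lt_of_le hi (le_max_left _ _))
      rw [ht'] at this; dsimp only at this; rwa [if_pos hi] at this
  rw [hset1, hset2]
  have han : a + 2 ≤ n' := le_max_right _ _
  have hg0 : ∀ (i : ℕ) (y : Λ), 0 ≤ (t' i).indicator (fun _ => (1 : ℝ)) y := fun i y =>
    Set.indicator_nonneg (fun _ _ => zero_le_one) _
  have hg1 : ∀ (i : ℕ) (y : Λ), (t' i).indicator (fun _ => (1 : ℝ)) y ≤ 1 := fun i y => by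
    classical
    rw [Set.indicator_apply]
    split_ifs
    exacts [le_refl 1, zero_le_one]
  have key := swap_integral m hc a n' han (fun i => (t' i).indicator (fun _ => (1 : ℝ)))
    (fun i => measurable_const.indicator (ht'meas i)) hg0 hg1
  have h1 := measure_box_eq_integral m n' t' ht'meas (⇑(Equiv.swap a (a + 1)))
  have h2 := measure_box_eq_integral m n' t' ht'meas (fun i => i)
  refine (ENNReal.toReal_eq_toReal_iff' (measure_ne_top m _) (measure_ne_top m _)).1 ?_
  rw [h1, h2, key]

omit [IsProbabilityMeasure m] hc in
lemma comp_to_maps (f g' : ℕ → ℕ) :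
    Measure.map (fun x : ℕ → Λ => x ∘ (f ∘ g')) m
      = Measure.map (fun x : ℕ → Λ => x ∘ g') (Measure.map (fun x : ℕ → Λ => x ∘ f) m) := by
  rw [Measure.map_map (meas_comp g') (meas_comp f)]
  rfl

lemma swap_inv (a b : ℕ) :
    Measure.map (fun x : ℕ → Λ => x ∘ (Equiv.swap a b : ℕ → ℕ)) m = m := by
  have main : ∀ d a b : ℕ, b = a + d + 1 →
      Measure.map (fun x : ℕ → Λ => x ∘ (Equiv.swap a b : ℕ → ℕ)) m = m := by
    intro d
    induction d using Nat.strong_induction_on with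
    | _ d IH =>
      intro a b hb
      rcases Nat.eq_zero_or_pos d with hd | hd
      · subst hd
        have : b = a + 1 := by omega
        subst this
        exact adj_swap m hc a
      · set c := a + d with hcdef
        have hcb : b = c + 1 := by omega
        have h1 : Measure.map (fun x : ℕ → Λ => x ∘ (Equiv.swap c b : ℕ → ℕ)) m = m :=
          IH 0 (by omega) c b (by omega)
        have h2 : Measure.map (fun x : ℕ → Λ => x ∘ (Equiv.swap a c : ℕ → ℕ)) m = m :=
          IH (d - 1) (by omega) a c (by omega)
        have hswid : (⇑(Equiv.swap a b) : ℕ → ℕ)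
            = ⇑(Equiv.swap c b) ∘ (⇑(Equiv.swap a c) ∘ ⇑(Equiv.swap c b)) := by
          funext x
          simp only [Function.comp, Equiv.swap_apply_def]
          split_ifs <;> omega
        rw [hswid, comp_to_maps m, h1, comp_to_maps m, h2, h1]
  rcases lt_trichotomy a b with h | h | h
  · exact main (b - a - 1) a b (by omega)
  · subst h
    have : (fun x : ℕ → Λ => x ∘ (Equiv.swap a a : ℕ → ℕ)) = fun x => x := by
      funext x
      rw [Equiv.swap_self]
      rfl
    rw [this]
    exact Measure.map_id
  · rw [Equiv.swap_comm]
    exact main (a - b - 1) b a (by omega)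

end Analytic

section Swaps

variable (m : Measure (ℕ → Λ)) [IsProbabilityMeasure m]
variable (hs : ∀ a b : ℕ, Measure.map (fun x : ℕ → Λ => x ∘ (Equiv.swap a b : ℕ → ℕ)) m = m)

include hs

lemma exists_perm (σ : ℕ → ℕ) (hσ : Function.Injective σ) (n : ℕ) :
    ∃ τ : Equiv.Perm ℕ, (Measure.map (fun x : ℕ → Λ => x ∘ ⇑τ) m = m) ∧
      ∀ i < n, τ i = σ i := by
  induction n with
  | zero =>
    refine ⟨Equiv.refl ℕ, ?_, fun i hi => absurd hi (by omega)⟩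
    have : (fun x : ℕ → Λ => x ∘ ⇑(Equiv.refl ℕ)) = fun x => x := rfl
    rw [this]
    exact Measure.map_id
  | succ n IHn =>
    obtain ⟨τ, hτm, hτ⟩ := IHn
    set b := τ.symm (σ n) with hbdef
    refine ⟨τ * Equiv.swap n b, ?_, ?_⟩
    · have hcomp : (fun x : ℕ → Λ => x ∘ ⇑(τ * Equiv.swap n b))
          = (fun x : ℕ → Λ => x ∘ ⇑(Equiv.swap n b)) ∘ (fun x : ℕ → Λ => x ∘ ⇑τ) := rfl
      rw [hcomp, ← Measure.map_map (meas_comp _) (meas_comp _), hτm, hs n b]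
    · intro i hi
      rcases Nat.lt_succ_iff_lt_or_eq.1 hi with hlt | heq
      · have hib : i ≠ b := by
          intro hib
          have : τ i = σ n := by rw [hib, hbdef]; exact τ.apply_symm_apply _
          rw [hτ i hlt] at this
          exact absurd (hσ this) (by omega)
        have : (τ * Equiv.swap n b) i = τ i := by
          rw [Equiv.Perm.mul_apply, Equiv.swap_apply_of_ne_of_ne (by omega) hib]
        rw [this, hτ i hlt]
      · subst heq
        rw [Equiv.Perm.mul_apply, Equiv.swap_apply_left, hbdef, τ.apply_symm_apply]

lemma inj_inv (σ : ℕ → ℕ) (hσ : Function.Injective σ) :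
    Measure.map (fun x : ℕ → Λ => x ∘ σ) m = m := by
  have hmeas : Measurable fun x : ℕ → Λ => x ∘ σ := meas_comp σ
  haveI : IsProbabilityMeasure (Measure.map (fun x : ℕ → Λ => x ∘ σ) m) :=
    Measure.isProbabilityMeasure_map hmeas.aemeasurable
  refine ext_boxes _ m ?_
  intro n t ht
  obtain ⟨τ, hτm, hτ⟩ := exists_perm m hs σ hσ n
  rw [Measure.map_apply hmeas (box_meas ht)]
  have hpre : (fun x : ℕ → Λ => x ∘ σ) ⁻¹' {x | ∀ i < n, x i ∈ t i}
      = (fun x : ℕ → Λ => x ∘ ⇑τ) ⁻¹' {x | ∀ i < n, x i ∈ t i} := by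
    ext x
    simp only [Set.mem_preimage, Set.mem_setOf_eq, Function.comp]
    constructor <;> intro h i hi
    · rw [hτ i hi]; exact h i hi
    · have := h i hi; rwa [hτ i hi] at this
  rw [hpre, ← Measure.map_apply (meas_comp _) (box_meas ht), hτm]

end Swaps

end Stmt19Aux

theorem stmt19 {Λ : Type*} [MetricSpace Λ] [CompactSpace Λ]
    [MeasurableSpace Λ] [BorelSpace Λ]
    (m : Measure (ℕ → Λ)) [IsProbabilityMeasure m] :
    ((∀ σ : Equiv.Perm ℕ, {i | σ i ≠ i}.Finite →
        Measure.map (fun x : ℕ → Λ => x ∘ σ) m = m) ↔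
      (∀ σ : ℕ → ℕ, Function.Injective σ →
        Measure.map (fun x : ℕ → Λ => x ∘ σ) m = m)) ∧
    ((∀ σ : ℕ → ℕ, Function.Injective σ →
        Measure.map (fun x : ℕ → Λ => x ∘ σ) m = m) ↔
      (∀ σ : ℕ → ℕ, StrictMono σ →
        Measure.map (fun x : ℕ → Λ => x ∘ σ) m = m)) := by
  constructor
  · constructor
    · intro hfp σ hσ
      refine Stmt19Aux.inj_inv m ?_ σ hσ
      intro a b
      refine hfp (Equiv.swap a b) ?_
      refine Set.Finite.subset (Set.Finite.insert a (Set.finite_singleton b)) ?_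
      intro i hi
      by_contra hmem
      simp only [Set.mem_insert_iff, Set.mem_singleton_iff] at hmem
      push_neg at hmem
      exact hi (Equiv.swap_apply_of_ne_of_ne hmem.1 hmem.2)
    · intro hinj σ _
      exact hinj (⇑σ) σ.injective
  · constructor
    · intro hinj σ hσ
      exact hinj σ hσ.injective
    · intro hsm σ hσ
      exact Stmt19Aux.inj_inv m (fun a b => Stmt19Aux.swap_inv m hsm a b) σ hσ
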